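/- arXiv:2602.23211 — 7 statements merged into one kernel-verified Lean document; each statement's English description precedes it below -/
import Mathlib

section
/- For functors S, T : Set → Set and any relation E ⊆ A × B, the relation lifting of E by the composite functor satisfies (ST)̄(E) = S̄(T̄(E)). -/
open CategoryTheory

universe u

/-- The `T`-relation lifting of a relation `E ⊆ A × B`. -/
def relLift (T : Type u ⥤ Type u) {A B : Type u} (E : Set (A × B)) :
    Set (T.obj A × T.obj B) :=
  {p | ∃ u : T.obj E, T.map (TypeCat.ofHom fun e : E => e.val.1) u = p.1 ∧
        T.map (TypeCat.ofHom fun e : E => e.val.2) u = p.2}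

/-- Relation lifting respects composition of functors: `(S∘T)-lifting = S-lifting of T-lifting`. -/
theorem relLift_comp (S T : Type u ⥤ Type u) {A B : Type u} (E : Set (A × B)) :
    relLift (T ⋙ S) E = relLift S (relLift T E) := by
  ext p
  constructor
  · rintro ⟨u, h1, h2⟩
    refine ⟨S.map (TypeCat.ofHom fun t : T.obj E =>
      (⟨(T.map (TypeCat.ofHom fun e : E => e.val.1) t, T.map (TypeCat.ofHom fun e : E => e.val.2) t),
        ⟨t, rfl, rfl⟩⟩ : relLift T E)) u, ?_, ?_⟩
    · rw [← FunctorToTypes.map_comp_apply]; exact h1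
    · rw [← FunctorToTypes.map_comp_apply]; exact h2
  · rintro ⟨v, h1, h2⟩
    have : ∀ r : relLift T E, ∃ t : T.obj E,
        T.map (TypeCat.ofHom fun e : E => e.val.1) t = r.val.1 ∧
        T.map (TypeCat.ofHom fun e : E => e.val.2) t = r.val.2 := fun r => r.property
    choose g hg1 hg2 using this
    refine ⟨S.map (TypeCat.ofHom g) v, ?_, ?_⟩
    · show S.map (T.map _) (S.map (TypeCat.ofHom g) v) = p.1
      rw [← FunctorToTypes.map_comp_apply]
      have : (TypeCat.ofHom g ≫ T.map (TypeCat.ofHom fun e : E => e.val.1)) =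
          (TypeCat.ofHom fun r : relLift T E => r.val.1) := by ext r; exact hg1 r
      rw [this]; exact h1
    · show S.map (T.map _) (S.map (TypeCat.ofHom g) v) = p.2
      rw [← FunctorToTypes.map_comp_apply]
      have : (TypeCat.ofHom g ≫ T.map (TypeCat.ofHom fun e : E => e.val.2)) =
          (TypeCat.ofHom fun r : relLift T E => r.val.2) := by ext r; exact hg2 r
      rw [this]; exact h2
end

section
/- The natural transformation ν1 = μ_P ∘ μ_{PP} : PPPP ⇒ PP, where μ is the union multiplication of the powerset monad, makes (PP, ν1) a semimonad: ν1 ∘ (PP)ν1 = ν1 ∘ ν1_{PP} as natural transformations PPPPPP ⇒ PP. -/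
/-- The multiplication `ν1 = μ_P ∘ μ_{PP} : PPPP ⇒ PP` on the double powerset functor:
`(ν1)_A = μ_{P(A)} ∘ μ_{PP(A)}`, i.e. a double union. -/
def nu1 {A : Type*} (X : Set (Set (Set (Set A)))) : Set (Set A) :=
  ⋃₀ ⋃₀ X

/-- `(PP, ν1)` is a semimonad: `ν1 ∘ (PP)ν1 = ν1 ∘ ν1_{PP}` as natural
transformations `(PP)(PP)(PP) ⇒ PP`. Note that the map of the functor `PP` on a
function `g` is the double direct image `Set.image (Set.image g)`. -/
theorem nu1_semimonad {A : Type*}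
    (X : Set (Set (Set (Set (Set (Set A)))))) :
    nu1 (Set.image (Set.image (nu1 (A := A))) X) = nu1 (nu1 X) := by
  ext s
  simp only [nu1, Set.mem_sUnion, Set.mem_image]
  constructor
  · rintro ⟨t, ⟨T, ⟨Y, hY, rfl⟩, u, hu, rfl⟩, hs⟩
    simp only [nu1, Set.mem_sUnion] at hs
    obtain ⟨w, ⟨v, hv, hw⟩, hsw⟩ := hs
    exact ⟨w, ⟨v, ⟨u, ⟨Y, hY, hu⟩, hv⟩, hw⟩, hsw⟩
  · rintro ⟨w, ⟨v, ⟨u, ⟨Y, hY, hu⟩, hv⟩, hw⟩, hsw⟩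
    exact ⟨⋃₀ ⋃₀ u, ⟨Set.image (nu1 (A := A)) Y, ⟨Y, hY, rfl⟩, u, hu, rfl⟩,
      w, ⟨v, hv, hw⟩, hsw⟩
end

section
/- The natural transformation ν2 : PPPP ⇒ PP given by ν2 = Pμ ∘ PPμ, i.e. with components (ν2)_A = (Pμ)_A ∘ (PPμ)_A = P(μ_A) ∘ PP(μ_A), makes (PP, ν2) a semimonad: ν2 ∘ (PP)ν2 = ν2 ∘ ν2_{PP}. -/
/-- The multiplication `ν2 = Pμ ∘ PPμ : PPPP ⇒ PP` on the double powerset functor: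
`(ν2)_A (X) = { ⋃₀ { ⋃₀ Z | Z ∈ Y } | Y ∈ X }`. -/
def nu2 {A : Type*} (X : Set (Set (Set (Set A)))) : Set (Set A) :=
  (fun Y => ⋃₀ (Set.sUnion '' Y)) '' X

/-- `(PP, ν2)` is a semimonad: `ν2 ∘ (PP)ν2 = ν2 ∘ ν2_{PP}` as natural
transformations `(PP)(PP)(PP) ⇒ PP`. Note that the map of the functor `PP` on a
function `g` is the double direct image `Set.image (Set.image g)`. -/
theorem nu2_semimonad {A : Type*}
    (X : Set (Set (Set (Set (Set (Set A)))))) :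
    nu2 (Set.image (Set.image (nu2 (A := A))) X) = nu2 (nu2 X) := by
  simp only [nu2, ← Set.image_comp]
  apply Set.image_congr'
  intro W
  simp only [Function.comp]
  ext a
  simp [Set.mem_sUnion, nu2]
end

section
/- For F-hypergraph structures H, K ⊆ A × P(A) with neighbourhood coalgebras N_H, N_K : A → PP(A) given by N_H(a) = {U | (a,U) ∈ H}, the Kleisli composite with respect to the semimonad ν1 = μ_P ∘ μ_{PP} on PP equals the neighbourhood coalgebra of the tight composite: ν1_A ∘ PP(N_K) ∘ N_H = N_{K ⧫ H}, where K ⧫ H = {(a,U) | ∃ (a,V) ∈ H and b ∈ V with (b,U) ∈ K}. -/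
/-- The neighbourhood coalgebra of an F-hypergraph structure `H ⊆ A × P(A)`. -/
def Nbhd {A : Type*} (H : Set (A × Set A)) : A → Set (Set A) :=
  fun a => {U | (a, U) ∈ H}

/-- The tight composite of F-hypergraph structures. -/
def tightComp {A : Type*} (K H : Set (A × Set A)) : Set (A × Set A) :=
  {p | ∃ V, (p.1, V) ∈ H ∧ ∃ b ∈ V, (b, p.2) ∈ K}

/-- The Kleisli composite of neighbourhood coalgebras with respect to `ν1` is the
neighbourhood coalgebra of the tight composite: `ν1_A ∘ PP(N_K) ∘ N_H = N_{K ⧫ H}`. -/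
theorem kleisli_nu1_eq_tight {A : Type*} (H K : Set (A × Set A)) :
    (fun a => nu1 (Set.image (Set.image (Nbhd K)) (Nbhd H a)))
      = Nbhd (tightComp K H) := by
  funext a
  ext U
  simp only [nu1, Nbhd, tightComp, Set.mem_sUnion, Set.mem_image, Set.mem_setOf_eq]
  constructor
  · rintro ⟨t, ⟨s, ⟨V, hV, rfl⟩, hs⟩, hU⟩
    obtain ⟨b, hb, rfl⟩ := hs
    exact ⟨V, hV, b, hb, hU⟩
  · rintro ⟨V, hV, b, hb, hK⟩
    exact ⟨Nbhd K b, ⟨_, ⟨V, hV, rfl⟩, ⟨b, hb, rfl⟩⟩, hK⟩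
end

section
/- For F-hypergraph structures H, K ⊆ A × P(A) with neighbourhood coalgebras N_H, N_K : A → PP(A), the Kleisli composite with respect to the semimonad ν2 = Pμ ∘ PPμ on PP equals the neighbourhood coalgebra of the loose composite: (ν2)_A ∘ PP(N_K) ∘ N_H = N_{K ◇ H}, where K ◇ H = {(a,W) | ∃ (a,V) ∈ H such that W = ⋃_{b ∈ V} ⋃_{(b,U) ∈ K} U}. -/
/-- The loose composite of F-hypergraph structures. -/
def looseComp {A : Type*} (K H : Set (A × Set A)) : Set (A × Set A) :=
  {p | ∃ V, (p.1, V) ∈ H ∧ p.2 = ⋃₀ {U | ∃ b ∈ V, (b, U) ∈ K}}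

lemma key {A : Type*} (K : Set (A × Set A)) (V : Set A) :
    ⋃₀ (Set.sUnion '' (Set.image (Nbhd K) V)) = ⋃₀ {U | ∃ b ∈ V, (b, U) ∈ K} := by
  ext x
  simp only [Set.mem_sUnion, Set.mem_image, Nbhd, Set.mem_setOf_eq]
  constructor
  · rintro ⟨t, ⟨s, ⟨b, hb, rfl⟩, rfl⟩, hx⟩
    rcases hx with ⟨U, hU, hxU⟩
    exact ⟨U, ⟨b, hb, hU⟩, hxU⟩
  · rintro ⟨U, ⟨b, hb, hU⟩, hxU⟩
    exact ⟨⋃₀ {U | (b, U) ∈ K}, ⟨_, ⟨b, hb, rfl⟩, rfl⟩, U, hU, hxU⟩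

/-- The Kleisli composite of neighbourhood coalgebras with respect to `ν2` is the
neighbourhood coalgebra of the loose composite: `ν2_A ∘ PP(N_K) ∘ N_H = N_{K ◇ H}`. -/
theorem kleisli_nu2_eq_loose {A : Type*} (H K : Set (A × Set A)) :
    (fun a => nu2 (Set.image (Set.image (Nbhd K)) (Nbhd H a)))
      = Nbhd (looseComp K H) := by
  funext a
  ext W
  simp only [nu2, Set.mem_image, Nbhd, looseComp, Set.mem_setOf_eq]
  constructor
  · rintro ⟨Y, ⟨V, hV, rfl⟩, rfl⟩
    exact ⟨V, hV, key K V⟩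
  · rintro ⟨V, hV, rfl⟩
    exact ⟨_, ⟨V, hV, rfl⟩, key K V⟩
end

section
/- Let H = (A, H) and K = (B, K) be F-hypergraphs and f : A → B a function that preserves hyperedges. Then f satisfies PP(f) ∘ N_H = N_K ∘ f (i.e., is a homomorphism of the associated double-powerset coalgebras) if and only if f also reflects hyperedges: for every a ∈ A and every (f(a), U) ∈ K there exists V ⊆ A with (a, V) ∈ H and f(V) = U. -/
/-- Let `(A, H)` and `(B, K)` be F-hypergraphs and `f : A → B` a function that
preserves hyperedges. Then `f` is a homomorphism of the associated double-powerset
coalgebras (`PP(f) ∘ N_H = N_K ∘ f`) iff `f` also reflects hyperedges. -/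
theorem coalgebra_hom_iff_reflects {A B : Type*}
    (H : Set (A × Set A)) (K : Set (B × Set B)) (f : A → B)
    (hpres : ∀ p ∈ H, (f p.1, f '' p.2) ∈ K) :
    (∀ a, Set.image (Set.image f) (Nbhd H a) = Nbhd K (f a)) ↔
      (∀ a U, (f a, U) ∈ K → ∃ V, (a, V) ∈ H ∧ f '' V = U) := by
  constructor
  · intro h a U hU
    have : U ∈ Set.image (Set.image f) (Nbhd H a) := by rw [h a]; exact hU
    obtain ⟨V, hV, rfl⟩ := this
    exact ⟨V, hV, rfl⟩
  · intro h a
    ext U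
    constructor
    · rintro ⟨V, hV, rfl⟩
      exact hpres (a, V) hV
    · intro hU
      obtain ⟨V, hV, hVU⟩ := h a U hU
      exact ⟨V, hV, hVU⟩
end

section
/- Let G = (A, (R_i)_{i=1}^k) be a multirelational graph and E an equivalence relation on A which is outward-regular for each graph (A, R_i). Then the assignment R ↦ R/E (blockmodel of the relation R by E) extends to a well-defined surjective semigroup homomorphism from Role(G), the semigroup generated by R_1,…,R_k under relation composition, onto Role(G/E), the semigroup generated by R_1/E,…,R_k/E. In particular, (R ∗ S)/E = (R/E) ∗ (S/E) for all R, S in Role(G). -/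
/-- Composition of binary relations: `rcomp R S = {(v,w) | ∃ u, (v,u) ∈ S ∧ (u,w) ∈ R}`. -/
def rcomp {A : Type*} (R S : Set (A × A)) : Set (A × A) :=
  {p | ∃ u, (p.1, u) ∈ S ∧ (u, p.2) ∈ R}

/-- The semigroup of roles generated by relations `Rs 1, …, Rs k`:
the closure of the generators under composition. -/
inductive InRole {A : Type*} {k : ℕ} (Rs : Fin k → Set (A × A)) : Set (A × A) → Prop
  | gen (i : Fin k) : InRole Rs (Rs i)
  | comp {R S : Set (A × A)} : InRole Rs R → InRole Rs S → InRole Rs (rcomp R S)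

/-- The blockmodel of a relation `R` by an equivalence (setoid) on `A`. -/
def block {A : Type*} (s : Setoid A) (R : Set (A × A)) :
    Set (Quotient s × Quotient s) :=
  {p | ∃ x y, (x, y) ∈ R ∧ Quotient.mk s x = p.1 ∧ Quotient.mk s y = p.2}

/-- Outward regularity of a setoid for a relation. -/
def OutReg {A : Type*} (s : Setoid A) (R : Set (A × A)) : Prop :=
  ∀ a a', s.r a a' → ∀ b, (a, b) ∈ R → ∃ b', (a', b') ∈ R ∧ s.r b b'

lemma outReg_of_inRole {A : Type*} {k : ℕ} {Rs : Fin k → Set (A × A)} {s : Setoid A}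
    (hreg : ∀ i, OutReg s (Rs i)) {R : Set (A × A)} (h : InRole Rs R) : OutReg s R := by
  induction h with
  | gen i => exact hreg i
  | comp hR hS ihR ihS =>
    intro a a' haa b hab
    obtain ⟨u, huS, huR⟩ := hab
    obtain ⟨u', hu'S, huu'⟩ := ihS a a' haa u huS
    obtain ⟨b', hb'R, hbb'⟩ := ihR u u' huu' b huR
    exact ⟨b', ⟨u', hu'S, hb'R⟩, hbb'⟩

lemma block_rcomp {A : Type*} {s : Setoid A} {R S : Set (A × A)} (hR : OutReg s R) :
    block s (rcomp R S) = rcomp (block s R) (block s S) := by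
  ext ⟨p, q⟩
  constructor
  · rintro ⟨x, y, ⟨u, huS, huR⟩, hx, hy⟩
    exact ⟨Quotient.mk s u, ⟨x, u, huS, hx, rfl⟩, ⟨u, y, huR, rfl, hy⟩⟩
  · rintro ⟨U, ⟨x₁, u₁, hS, hx₁, hu₁⟩, ⟨u₂, y₂, hRm, hu₂, hy₂⟩⟩
    have huu : s.r u₂ u₁ := Quotient.exact (hu₂.trans hu₁.symm)
    obtain ⟨y', hy'R, hyy'⟩ := hR u₂ u₁ huu y₂ hRm
    refine ⟨x₁, y', ⟨u₁, hS, hy'R⟩, hx₁, ?_⟩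
    exact (Quotient.sound hyy').symm.trans hy₂

/-- Let `G = (A, (Rᵢ))` be a multirelational graph and `s` an equivalence on `A` which is
outward-regular for each `(A, Rᵢ)`. Then `R ↦ R/E` is a well-defined surjective semigroup
homomorphism from `Role(G)` onto `Role(G/E)`: it maps roles to roles, hits every role of the
blockmodel, and satisfies `(R ∗ S)/E = (R/E) ∗ (S/E)` on `Role(G)`. -/
theorem blockmodel_role_reduction {A : Type*} {k : ℕ}
    (Rs : Fin k → Set (A × A)) (s : Setoid A)
    (hreg : ∀ i, ∀ a a', s.r a a' → ∀ b, (a, b) ∈ Rs i →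
      ∃ b', (a', b') ∈ Rs i ∧ s.r b b') :
    (∀ R, InRole Rs R → InRole (fun i => block s (Rs i)) (block s R)) ∧
    (∀ R', InRole (fun i => block s (Rs i)) R' →
      ∃ R, InRole Rs R ∧ block s R = R') ∧
    (∀ R S, InRole Rs R → InRole Rs S →
      block s (rcomp R S) = rcomp (block s R) (block s S)) := by
  have hmaps : ∀ R, InRole Rs R → InRole (fun i => block s (Rs i)) (block s R) := by
    intro R h
    induction h with
    | gen i => exact InRole.gen i
    | comp hR hS ihR ihS =>
      rw [block_rcomp (outReg_of_inRole hreg hR)]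
      exact InRole.comp ihR ihS
  refine ⟨hmaps, ?_, fun R S hR _ => block_rcomp (outReg_of_inRole hreg hR)⟩
  intro R' h
  induction h with
  | gen i => exact ⟨Rs i, InRole.gen i, rfl⟩
  | comp hR hS ihR ihS =>
    obtain ⟨R, hRrole, rfl⟩ := ihR
    obtain ⟨S, hSrole, rfl⟩ := ihS
    exact ⟨rcomp R S, InRole.comp hRrole hSrole,
      block_rcomp (outReg_of_inRole hreg hRrole)⟩
end
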